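/- arXiv:1404.4786 — 3 statements merged into one kernel-verified Lean document; each statement's English description precedes it below -/
import Mathlib

section
/- Let F be a field such that there exists a ring homomorphism from ℝ to F or from the p-adic numbers ℚ_p to F for some prime p. Let w ∈ F_d be a nontrivial word. Define Δ : SL₂(F)^d → F by Δ(g) = (tr(w(g)))² − 4, where tr denotes the matrix trace and w(g) is the value of the word map at the tuple g. Then the set of elements of F that lie in the image of Δ and are squares of nonzero elements of F is infinite. -/
/-!
Conjugating `w`, we may assume it is cyclically reduced, `w = x₁ ⋯ xₖ`. Write `A(a)`, `B(b)` for
the upper and lower unipotent matrices and send the `i`-th generator to `B((i+1)t) A(t) B((i+1)t)`,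
so that `xⱼ` goes to `B(ℓⱼ t) A(±t) B(ℓⱼ t)` with `ℓⱼ = ±(iⱼ+1)`. Adjacent `B`-factors merge, and up
to conjugation `w(g)` is the product of the syllables `A(±t) B((ℓⱼ + ℓⱼ₊₁) t)`, indices taken
cyclically. The integers `ℓⱼ + ℓⱼ₊₁` are nonzero because `w` is cyclically reduced, and they take
finitely many values, so in characteristic zero their norms are bounded below.
Once `‖t‖` is large, every syllable maps the cone `2‖v₁‖ ≤ ‖v₀‖` into itself, for columns as well as
rows, so the product has a dominant `(0,0)` entry and, having determinant one, a trace `τ` with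
`‖τ‖ ≳ ‖t‖`. Over `ℝ`, and over `ℚ_p` by Hensel's lemma, `τ² - 4` is then a nonzero square, and
these values of `Δ` have unbounded norm; an injective ring map `K → F` carries them to `F`.
-/

/-- For a word `w ∈ F_d`, the discriminant map `Δ : SL₂(F)^d → F`,
`Δ(g) = (tr w(g))² - 4`. -/
noncomputable def wordDiscriminant {F : Type*} [Field F] {d : ℕ} (w : FreeGroup (Fin d))
    (g : Fin d → Matrix.SpecialLinearGroup (Fin 2) F) : F :=
  (Matrix.trace
    ((FreeGroup.lift g w : Matrix.SpecialLinearGroup (Fin 2) F) : Matrix (Fin 2) (Fin 2) F)) ^ 2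
    - 4

open Matrix
open scoped MatrixGroups

namespace FreeGroup

variable {α : Type*}

lemma IsCyclicallyReduced.isReduced_append_head {x : α × Bool} {L : List (α × Bool)}
    (h : IsCyclicallyReduced (x :: L)) : IsReduced (x :: L ++ [x]) := by
  rw [IsReduced, List.isChain_append]
  exact ⟨h.1, List.isChain_singleton x, fun a ha b hb => h.2 a ha b (by simpa using hb)⟩

lemma exists_conj_isCyclicallyReduced [DecidableEq α] {w : FreeGroup α} (hw : w ≠ 1) :
    ∃ (u : FreeGroup α) (x : α × Bool) (L : List (α × Bool)),
      IsCyclicallyReduced (x :: L) ∧ w = u * mk (x :: L) * u⁻¹ := by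
  have hw' : w = mk (reduceCyclically.conjugator w.toWord) * mk (reduceCyclically w.toWord) *
      (mk (reduceCyclically.conjugator w.toWord))⁻¹ := by
    rw [inv_mk, mul_mk, mul_mk, reduceCyclically.conj_conjugator_reduceCyclically, mk_toWord]
  have hred := reduceCyclically.isCyclicallyReduced (isReduced_toWord (x := w))
  cases h : reduceCyclically w.toWord with
  | nil => exact absurd (by rw [hw', h, ← one_eq_mk, mul_one, mul_inv_cancel]) hw
  | cons x L => exact ⟨_, x, L, h ▸ hred, h ▸ hw'⟩

end FreeGroup

lemma Matrix.SpecialLinearGroup.trace_mul_mul_inv {n R : Type*} [DecidableEq n] [Fintype n]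
    [CommRing R] (a b : SpecialLinearGroup n R) :
    trace ((a * b * a⁻¹ : SpecialLinearGroup n R) : Matrix n n R) = trace (b : Matrix n n R) := by
  rw [Matrix.SpecialLinearGroup.coe_mul, trace_mul_comm, ← Matrix.SpecialLinearGroup.coe_mul,
    inv_mul_cancel_left]

lemma exists_pos_le_norm_of_ne_zero {ι E : Type*} [Finite ι] [NormedAddCommGroup E] (f : ι → E) :
    ∃ c > 0, ∀ i, f i ≠ 0 → c ≤ ‖f i‖ := by
  classical
  rcases isEmpty_or_nonempty ι with hι | hι
  · exact ⟨1, one_pos, fun i => isEmptyElim i⟩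
  obtain ⟨i₀, hi₀⟩ := Finite.exists_min fun i => if f i = 0 then 1 else ‖f i‖
  refine ⟨if f i₀ = 0 then 1 else ‖f i₀‖, by split_ifs with h <;> simp [h], fun i hi => ?_⟩
  simpa [hi] using hi₀ i

lemma PadicInt.isSquare_of_norm_one_sub_lt {p : ℕ} [Fact p.Prime] {u : ℤ_[p]}
    (h : ‖1 - u‖ < ‖(2 : ℤ_[p])‖ ^ 2) : IsSquare u := by
  obtain ⟨z, hz, -⟩ := hensels_lemma (p := p) (F := Polynomial.X ^ 2 - Polynomial.C u) (a := 1)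
    (by simpa [one_add_one_eq_two] using h)
  exact ⟨z, by rw [← sq, eq_comm, ← sub_eq_zero]; simpa using hz⟩

lemma Padic.isSquare_sq_sub_four {p : ℕ} [Fact p.Prime] {τ : ℚ_[p]} (h : 1 < ‖τ‖) :
    IsSquare (τ ^ 2 - 4) := by
  have hτ : τ ≠ 0 := norm_pos_iff.1 (one_pos.trans h)
  have h4 : ‖(4 : ℚ_[p])‖ ≤ 1 := by exact_mod_cast Padic.norm_int_le_one (p := p) 4
  have hsmall : ‖4 / τ ^ 2‖ < ‖(4 : ℚ_[p])‖ := by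
    rw [norm_div, norm_pow, div_lt_iff₀ (by positivity)]
    exact lt_mul_of_one_lt_right (norm_pos_iff.2 (by norm_num)) (one_lt_pow₀ h two_ne_zero)
  have hu : ‖1 - 4 / τ ^ 2‖ ≤ 1 := by
    simpa [sub_eq_add_neg] using (Padic.nonarchimedean 1 (-(4 / τ ^ 2))).trans
      (max_le (by simp) (by simpa using hsmall.le.trans h4))
  obtain ⟨z, hz⟩ := PadicInt.isSquare_of_norm_one_sub_lt (u := ⟨1 - 4 / τ ^ 2, hu⟩) (by
    change ‖(1 : ℚ_[p]) - (1 - 4 / τ ^ 2)‖ < ‖(2 : ℚ_[p])‖ ^ 2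
    rwa [sub_sub_cancel, ← norm_pow, show (2 : ℚ_[p]) ^ 2 = 4 by norm_num])
  have hz' : 1 - 4 / τ ^ 2 = (z : ℚ_[p]) * z := congrArg ((↑) : ℤ_[p] → ℚ_[p]) hz
  refine ⟨τ * z, ?_⟩
  rw [show τ ^ 2 - 4 = τ ^ 2 * (1 - 4 / τ ^ 2) by field_simp, hz']
  ring

lemma Real.isSquare_sq_sub_four {τ : ℝ} (h : 2 ≤ ‖τ‖) : IsSquare (τ ^ 2 - 4) := by
  have : 0 ≤ τ ^ 2 - 4 := by nlinarith [sq_abs τ, Real.norm_eq_abs τ]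
  exact ⟨√(τ ^ 2 - 4), (Real.mul_self_sqrt this).symm⟩

lemma wordDiscriminant_map {K F : Type*} [Field K] [Field F] (φ : K →+* F) {d : ℕ}
    (w : FreeGroup (Fin d)) (g : Fin d → SL(2, K)) :
    wordDiscriminant w (fun i => Matrix.SpecialLinearGroup.map φ (g i)) =
      φ (wordDiscriminant w g) := by
  have hlift : FreeGroup.lift (fun i => Matrix.SpecialLinearGroup.map φ (g i)) w =
      Matrix.SpecialLinearGroup.map φ (FreeGroup.lift g w) :=
    (FreeGroup.lift_unique ((Matrix.SpecialLinearGroup.map φ).comp (FreeGroup.lift g))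
      (by simp)).symm
  simp [wordDiscriminant, hlift, AddMonoidHom.map_trace φ, map_ofNat]

namespace SL2WordMap

variable {K : Type*}

section Syllables

variable [CommRing K]

def upperShear (x : K) : SL(2, K) := ⟨!![1, x; 0, 1], by simp⟩

def lowerShear (x : K) : SL(2, K) := ⟨!![1, 0; x, 1], by simp⟩

@[simp] lemma coe_upperShear (x : K) :
    (upperShear x : Matrix (Fin 2) (Fin 2) K) = !![1, x; 0, 1] := rfl

@[simp] lemma coe_lowerShear (x : K) :
    (lowerShear x : Matrix (Fin 2) (Fin 2) K) = !![1, 0; x, 1] := rfl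

lemma lowerShear_mul_lowerShear (x y : K) :
    lowerShear x * lowerShear y = lowerShear (x + y) :=
  Subtype.ext <| by simp

lemma upperShear_inv (x : K) : (upperShear x)⁻¹ = upperShear (-x) :=
  Subtype.ext <| by simp [adjugate_fin_two]

lemma lowerShear_inv (x : K) : (lowerShear x)⁻¹ = lowerShear (-x) :=
  Subtype.ext <| by simp [adjugate_fin_two]

def syllable (x y : K) : SL(2, K) := upperShear x * lowerShear y

lemma coe_syllable (x y : K) :
    (syllable x y : Matrix (Fin 2) (Fin 2) K) = !![1 + x * y, x; y, 1] := by
  simp [syllable]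

lemma vecMul_syllable (x y : K) (v : Fin 2 → K) :
    v ᵥ* (syllable x y : Matrix (Fin 2) (Fin 2) K) =
      (syllable y x : Matrix (Fin 2) (Fin 2) K) *ᵥ v := by
  ext i; fin_cases i <;> simp [coe_syllable, vecMul, mulVec, dotProduct, Fin.sum_univ_two] <;> ring

def syllableProd (l : List (K × K)) : SL(2, K) :=
  (l.map fun s => syllable s.1 s.2).prod

@[simp] lemma syllableProd_nil : syllableProd ([] : List (K × K)) = 1 := rfl

lemma syllableProd_cons (s : K × K) (l : List (K × K)) :
    syllableProd (s :: l) = syllable s.1 s.2 * syllableProd l := by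
  simp [syllableProd]

end Syllables

section Letters

variable {d : ℕ}

def letterSign (x : Fin d × Bool) : ℤ := if x.2 then 1 else -1

def letterWeight (x : Fin d × Bool) : ℤ := letterSign x * (x.1 + 1)

lemma letterWeight_add_ne_zero {x y : Fin d × Bool} (h : x.1 = y.1 → x.2 = y.2) :
    letterWeight x + letterWeight y ≠ 0 := by
  obtain ⟨i, a⟩ := x
  obtain ⟨j, b⟩ := y
  cases a <;> cases b <;> simp [letterWeight, letterSign, Fin.ext_iff] at h ⊢ <;> omega

variable [CommRing K]

def letterMatrix (t : K) (x : Fin d × Bool) : SL(2, K) :=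
  lowerShear (letterWeight x * t) * upperShear (letterSign x * t) * lowerShear (letterWeight x * t)

def pingPongTuple (t : K) (i : Fin d) : SL(2, K) := letterMatrix t (i, true)

lemma letterMatrix_false (t : K) (i : Fin d) :
    letterMatrix t (i, false) = (pingPongTuple t i)⁻¹ := by
  simp only [pingPongTuple, letterMatrix, letterWeight, letterSign, _root_.mul_inv_rev,
    upperShear_inv, lowerShear_inv, mul_assoc]
  push_cast
  ring_nf

lemma lift_pingPongTuple_mk (t : K) (L : List (Fin d × Bool)) :
    FreeGroup.lift (pingPongTuple t) (FreeGroup.mk L) = (L.map (letterMatrix t)).prod := by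
  rw [FreeGroup.lift_mk]
  congr 1
  refine List.map_congr_left fun x _ => ?_
  obtain ⟨i, _ | _⟩ := x
  · exact (letterMatrix_false t i).symm
  · rfl

def syllables (t : K) : List (Fin d × Bool) → List (K × K)
  | x :: y :: L =>
    ((letterSign x : K) * t, ((letterWeight x + letterWeight y : ℤ) : K) * t) ::
      syllables t (y :: L)
  | _ => []

lemma prod_letterMatrix_mul_lowerShear (t : K) (z : Fin d × Bool) :
    ∀ (x : Fin d × Bool) (L : List (Fin d × Bool)),
      ((x :: L).map (letterMatrix t)).prod * lowerShear (letterWeight z * t) =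
        lowerShear (letterWeight x * t) * syllableProd (syllables t (x :: L ++ [z]))
  | x, [] => by
    simp [syllables, syllableProd, syllable, letterMatrix, mul_assoc, ← lowerShear_mul_lowerShear,
      add_mul]
  | x, y :: L => by
    rw [List.map_cons, List.prod_cons, mul_assoc, prod_letterMatrix_mul_lowerShear t z y L]
    simp [syllables, syllableProd_cons, syllable, letterMatrix, mul_assoc,
      ← lowerShear_mul_lowerShear, add_mul]

lemma trace_lift_pingPongTuple_mk_cons (t : K) (x : Fin d × Bool) (L : List (Fin d × Bool)) :
    trace (FreeGroup.lift (pingPongTuple t) (FreeGroup.mk (x :: L)) : Matrix (Fin 2) (Fin 2) K) =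
      trace (syllableProd (syllables t (x :: L ++ [x])) : Matrix (Fin 2) (Fin 2) K) := by
  rw [lift_pingPongTuple_mk, eq_mul_inv_of_mul_eq (prod_letterMatrix_mul_lowerShear t x x L),
    Matrix.SpecialLinearGroup.trace_mul_mul_inv]

lemma exists_of_mem_syllables (t : K) : ∀ {N : List (Fin d × Bool)}, FreeGroup.IsReduced N →
    ∀ s ∈ syllables t N, ∃ x y : Fin d × Bool, (x.1 = y.1 → x.2 = y.2) ∧
      s = ((letterSign x : K) * t, ((letterWeight x + letterWeight y : ℤ) : K) * t)
  | x :: y :: L, hN, s, hs => by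
    rw [FreeGroup.isReduced_cons_cons] at hN
    rcases List.mem_cons.1 hs with rfl | hs
    · exact ⟨x, y, hN.1, rfl⟩
    · exact exists_of_mem_syllables t hN.2 s hs
  | [], _, s, hs | [_], _, s, hs => by simp [syllables] at hs

end Letters

section Estimates

variable [NormedField K]

def Dominant (v : Fin 2 → K) : Prop := 2 * ‖v 1‖ ≤ ‖v 0‖

lemma Dominant.syllable_mulVec {α β : K} {L : ℝ} (hL : 4 ≤ L) (hα : L ≤ ‖α‖) (hβ : L ≤ ‖β‖)
    {v : Fin 2 → K} (hv : Dominant v) :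
    Dominant ((syllable α β : Matrix (Fin 2) (Fin 2) K) *ᵥ v) ∧
      L * ‖v 0‖ ≤ ‖((syllable α β : Matrix (Fin 2) (Fin 2) K) *ᵥ v) 0‖ := by
  simp only [Dominant, coe_syllable, mulVec_fin_two, of_apply, cons_val', cons_val_zero,
    cons_val_one, empty_val', cons_val_fin_one, Fin.isValue] at hv ⊢
  have hfirst : ‖α‖ * ‖β‖ * ‖v 0‖ - ‖v 0‖ - ‖α‖ * ‖v 1‖ ≤ ‖(1 + α * β) * v 0 + α * v 1‖ := by
    have := norm_sub_le_norm_add (α * β * v 0) (v 0 + α * v 1)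
    have := norm_add_le (v 0) (α * v 1)
    simp only [norm_mul] at *
    rw [show α * β * v 0 + (v 0 + α * v 1) = (1 + α * β) * v 0 + α * v 1 by ring] at *
    linarith
  have hsecond : ‖β * v 0 + 1 * v 1‖ ≤ ‖β‖ * ‖v 0‖ + ‖v 1‖ := by
    simpa [norm_mul] using norm_add_le (β * v 0) (v 1)
  have hx := norm_nonneg (v 0)
  have hαx : 4 * ‖v 0‖ ≤ ‖α‖ * ‖v 0‖ := by nlinarith
  have hβx : L * ‖v 0‖ ≤ ‖β‖ * ‖v 0‖ := by nlinarith
  have hαβx : 0 ≤ (‖α‖ - 4) * (‖β‖ - 4) * ‖v 0‖ :=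
    mul_nonneg (mul_nonneg (by linarith) (by linarith)) hx
  have hαy : 2 * (‖α‖ * ‖v 1‖) ≤ ‖α‖ * ‖v 0‖ := by nlinarith [norm_nonneg α]
  constructor <;> nlinarith

variable {L : ℝ} {l : List (K × K)}

lemma Dominant.syllableProd_mulVec (hL : 4 ≤ L) (hl : ∀ s ∈ l, L ≤ ‖s.1‖ ∧ L ≤ ‖s.2‖)
    {v : Fin 2 → K} (hv : Dominant v) :
    Dominant ((syllableProd l : Matrix (Fin 2) (Fin 2) K) *ᵥ v) ∧
      L ^ l.length * ‖v 0‖ ≤ ‖((syllableProd l : Matrix (Fin 2) (Fin 2) K) *ᵥ v) 0‖ := by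
  induction l with
  | nil => simpa using hv
  | cons s l ih =>
    obtain ⟨hs, hl⟩ := List.forall_mem_cons.1 hl
    obtain ⟨hdom, hgrowth⟩ := ih hl
    rw [syllableProd_cons, Matrix.SpecialLinearGroup.coe_mul, ← mulVec_mulVec]
    obtain ⟨hdom', hgrowth'⟩ := hdom.syllable_mulVec hL hs.1 hs.2
    refine ⟨hdom', ?_⟩
    rw [List.length_cons, pow_succ, mul_comm _ L, mul_assoc]
    exact (mul_le_mul_of_nonneg_left hgrowth (by linarith)).trans hgrowth'

lemma Dominant.vecMul_syllableProd (hL : 4 ≤ L) (hl : ∀ s ∈ l, L ≤ ‖s.1‖ ∧ L ≤ ‖s.2‖)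
    {v : Fin 2 → K} (hv : Dominant v) :
    Dominant (v ᵥ* (syllableProd l : Matrix (Fin 2) (Fin 2) K)) := by
  induction l generalizing v with
  | nil => simpa using hv
  | cons s l ih =>
    obtain ⟨hs, hl⟩ := List.forall_mem_cons.1 hl
    rw [syllableProd_cons, Matrix.SpecialLinearGroup.coe_mul, ← vecMul_vecMul, vecMul_syllable]
    exact ih hl (hv.syllable_mulVec hL hs.2 hs.1).1

lemma norm_trace_ge_of_det_eq_one {M : Matrix (Fin 2) (Fin 2) K} (hM : M.det = 1)
    (h00 : 2 ≤ ‖M 0 0‖) (hcol : Dominant (M.col 0)) (hrow : Dominant (M.row 0)) :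
    ‖M 0 0‖ / 2 ≤ ‖M.trace‖ := by
  simp only [Dominant, col_apply, row_apply] at hcol hrow
  rw [det_fin_two] at hM
  rw [trace_fin_two]
  have h11 : ‖M 0 0‖ * ‖M 1 1‖ ≤ 1 + ‖M 0 1‖ * ‖M 1 0‖ := by
    rw [← norm_mul, show M 0 0 * M 1 1 = 1 + M 0 1 * M 1 0 by linear_combination hM, ← norm_mul]
    exact (norm_add_le _ _).trans (by rw [norm_one])
  have htr : ‖M 0 0‖ - ‖M 1 1‖ ≤ ‖M 0 0 + M 1 1‖ := by
    simpa using norm_sub_le_norm_add (M 0 0) (M 1 1)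
  nlinarith [mul_le_mul hcol hrow (by positivity) (by positivity), norm_nonneg (M 0 0)]

lemma norm_trace_syllableProd (hL : 4 ≤ L) (hl₀ : l ≠ [])
    (hl : ∀ s ∈ l, L ≤ ‖s.1‖ ∧ L ≤ ‖s.2‖) :
    L / 2 ≤ ‖(syllableProd l : Matrix (Fin 2) (Fin 2) K).trace‖ := by
  have he₀ : Dominant (Pi.single 0 1 : Fin 2 → K) := by simp [Dominant]
  obtain ⟨hcol, hgrowth⟩ := he₀.syllableProd_mulVec hL hl
  have hrow := he₀.vecMul_syllableProd hL hl
  rw [mulVec_single_one] at hcol hgrowth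
  rw [single_one_vecMul] at hrow
  have hpow : L ≤ L ^ l.length := le_self_pow₀ (by linarith) (by simpa using hl₀)
  simp only [Pi.single_eq_same, norm_one, mul_one, col_apply] at hgrowth
  have := norm_trace_ge_of_det_eq_one (Matrix.SpecialLinearGroup.det_coe _) (by linarith) hcol hrow
  linarith

variable {d : ℕ}

lemma norm_letterSign (x : Fin d × Bool) : ‖(letterSign x : K)‖ = 1 := by
  by_cases h : x.2 <;> simp [letterSign, h]

lemma norm_syllables_ge (t : K) {c : ℝ}
    (hc : ∀ x y : Fin d × Bool, (x.1 = y.1 → x.2 = y.2) →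
      c ≤ ‖((letterWeight x + letterWeight y : ℤ) : K)‖)
    {N : List (Fin d × Bool)} (hN : FreeGroup.IsReduced N) :
    ∀ s ∈ syllables t N, min 1 c * ‖t‖ ≤ ‖s.1‖ ∧ min 1 c * ‖t‖ ≤ ‖s.2‖ := by
  intro s hs
  obtain ⟨x, y, hxy, rfl⟩ := exists_of_mem_syllables t hN s hs
  simp only [norm_mul, norm_letterSign, one_mul]
  exact ⟨mul_le_of_le_one_left (norm_nonneg t) (min_le_left _ _),
    mul_le_mul_of_nonneg_right ((min_le_right _ _).trans (hc x y hxy)) (norm_nonneg t)⟩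

end Estimates

variable [NontriviallyNormedField K] [CharZero K] {d : ℕ}

theorem exists_norm_trace_lift_ge {w : FreeGroup (Fin d)} (hw : w ≠ 1) (C : ℝ) :
    ∃ g : Fin d → SL(2, K), C ≤ ‖trace (FreeGroup.lift g w : Matrix (Fin 2) (Fin 2) K)‖ := by
  obtain ⟨u, x, L, hred, rfl⟩ := FreeGroup.exists_conj_isCyclicallyReduced hw
  obtain ⟨c, hc₀, hc⟩ := exists_pos_le_norm_of_ne_zero
    fun p : (Fin d × Bool) × (Fin d × Bool) => ((letterWeight p.1 + letterWeight p.2 : ℤ) : K)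
  have hm : 0 < min 1 c := lt_min one_pos hc₀
  obtain ⟨t, ht⟩ := NormedField.exists_lt_norm K (max 4 (2 * C) / min 1 c)
  have hL : max 4 (2 * C) ≤ min 1 c * ‖t‖ := by
    rw [div_lt_iff₀' hm] at ht
    exact ht.le
  refine ⟨pingPongTuple t, ?_⟩
  rw [map_mul, map_mul, map_inv, Matrix.SpecialLinearGroup.trace_mul_mul_inv,
    trace_lift_pingPongTuple_mk_cons]
  have := norm_trace_syllableProd ((le_max_left _ _).trans hL) (by cases L <;> simp [syllables])
    (norm_syllables_ge t (fun x y h => hc (x, y) (by exact_mod_cast letterWeight_add_ne_zero h))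
      hred.isReduced_append_head)
  linarith [le_max_right 4 (2 * C)]

def wordDiscriminantSquares {F : Type*} [Field F] (w : FreeGroup (Fin d)) : Set F :=
  {x | x ∈ Set.range (wordDiscriminant w) ∧ ∃ y : F, y ≠ 0 ∧ x = y ^ 2}

theorem exists_mem_wordDiscriminantSquares_lt_norm
    (hsq : ∃ T : ℝ, ∀ τ : K, T ≤ ‖τ‖ → IsSquare (τ ^ 2 - 4)) {w : FreeGroup (Fin d)} (hw : w ≠ 1)
    (C : ℝ) : ∃ x ∈ wordDiscriminantSquares (F := K) w, C < ‖x‖ := by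
  obtain ⟨T, hT⟩ := hsq
  obtain ⟨g, hg⟩ := exists_norm_trace_lift_ge (K := K) hw (max T (|C| + ‖(4 : K)‖ + 1))
  set τ := trace (FreeGroup.lift g w : Matrix (Fin 2) (Fin 2) K)
  obtain ⟨y, hy⟩ := hT τ ((le_max_left _ _).trans hg)
  have hτ : |C| + ‖(4 : K)‖ + 1 ≤ ‖τ‖ := (le_max_right _ _).trans hg
  have hbig : |C| < ‖τ ^ 2 - 4‖ := by
    have := norm_sub_norm_le (τ ^ 2) 4
    rw [norm_pow] at this
    nlinarith [abs_nonneg C, norm_nonneg (4 : K)]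
  refine ⟨τ ^ 2 - 4, ⟨⟨g, rfl⟩, y, ?_, by rw [hy, sq]⟩, (le_abs_self C).trans_lt hbig⟩
  rintro rfl
  simp only [hy, mul_zero, norm_zero] at hbig
  exact (abs_nonneg C).not_gt hbig

theorem infinite_wordDiscriminantSquares_of_ringHom {F : Type*} [Field F]
    (hsq : ∃ T : ℝ, ∀ τ : K, T ≤ ‖τ‖ → IsSquare (τ ^ 2 - 4)) (φ : K →+* F)
    {w : FreeGroup (Fin d)} (hw : w ≠ 1) : (wordDiscriminantSquares (F := F) w).Infinite := by
  have hK : (wordDiscriminantSquares (F := K) w).Infinite := by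
    refine Set.Infinite.of_image norm (Set.infinite_of_not_bddAbove fun ⟨C, hC⟩ => ?_)
    obtain ⟨x, hx, hCx⟩ := exists_mem_wordDiscriminantSquares_lt_norm hsq hw C
    exact hCx.not_ge (hC ⟨x, hx, rfl⟩)
  refine (hK.image φ.injective.injOn).mono ?_
  rintro _ ⟨_, ⟨⟨g, rfl⟩, y, hy, hgy⟩, rfl⟩
  exact ⟨⟨fun i => Matrix.SpecialLinearGroup.map φ (g i), wordDiscriminant_map φ w g⟩, φ y,
    (map_ne_zero φ).2 hy, by rw [hgy, map_pow]⟩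

end SL2WordMap

/-- If `F` admits a ring homomorphism from `ℝ` or from some `ℚ_p`, and `w` is a nontrivial word,
then infinitely many squares of nonzero elements of `F` are values of the discriminant `Δ`. -/
theorem discriminant_squares_infinite {F : Type*} [Field F]
    (hF : Nonempty (ℝ →+* F) ∨ ∃ (p : ℕ) (hp : Fact p.Prime), Nonempty (@Padic p hp →+* F))
    {d : ℕ} (w : FreeGroup (Fin d)) (hw : w ≠ 1) :
    {x : F | x ∈ Set.range (wordDiscriminant w) ∧ ∃ y : F, y ≠ 0 ∧ x = y ^ 2}.Infinite := by
  rcases hF with ⟨⟨φ⟩⟩ | ⟨p, hp, ⟨φ⟩⟩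
  · exact SL2WordMap.infinite_wordDiscriminantSquares_of_ringHom
      ⟨2, fun τ hτ => Real.isSquare_sq_sub_four hτ⟩ φ hw
  · exact SL2WordMap.infinite_wordDiscriminantSquares_of_ringHom
      ⟨2, fun τ hτ => Padic.isSquare_sq_sub_four (by linarith)⟩ φ hw
end

section
/- Let F be a field of characteristic zero such that the polynomial X⁴ + 1 is irreducible in F[X] (equivalently, a primitive 8th root of unity generates a degree 4 extension of F; e.g., F = ℚ). Then there do not exist A, B ∈ SL₂(F) with A⁴B⁴ = −I₂; that is, the word map x⁴y⁴ does not represent the central element −I₂ of SL₂(F). -/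
open Polynomial

lemma no_fourth_root_neg_one {F : Type*} [Field F]
    (hirr : Irreducible (X ^ 4 + 1 : F[X])) (P : Matrix (Fin 2) (Fin 2) F)
    (hP : P ^ 4 = -1) : False := by
  have hdvd : ¬ (X ^ 4 + 1 : F[X]) ∣ P.charpoly := by
    intro h
    have h1 : ((X ^ 4 + 1 : F[X])).natDegree ≤ P.charpoly.natDegree :=
      Polynomial.natDegree_le_of_dvd h P.charpoly_monic.ne_zero
    have h2 : ((X ^ 4 + 1 : F[X])).natDegree = 4 := by compute_degree!
    have h3 : P.charpoly.natDegree = 2 := by simp [Matrix.charpoly_natDegree_eq_dim]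
    omega
  obtain ⟨a, b, hab⟩ := hirr.coprime_iff_not_dvd.mpr hdvd
  have := congrArg (aeval P) hab
  simp only [map_add, map_mul, map_pow, map_one, aeval_X, Matrix.aeval_self_charpoly,
    mul_zero, add_zero, hP] at this
  simp at this

lemma ch_two {F : Type*} [Field F] (M : Matrix (Fin 2) (Fin 2) F) (hdet : M.det = 1) :
    M * M = M.trace • M - 1 := by
  have hd := hdet
  rw [Matrix.det_fin_two] at hd
  ext i j
  fin_cases i <;> fin_cases j <;>
    simp [Matrix.mul_apply, Fin.sum_univ_two, Matrix.trace_fin_two, Matrix.one_apply]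
  · linear_combination -hd
  · ring
  · ring
  · linear_combination -hd

lemma pow_four_eq {F : Type*} [Field F] (M : Matrix (Fin 2) (Fin 2) F) (hdet : M.det = 1) :
    M ^ 4 = (M.trace ^ 3 - 2 * M.trace) • M + (1 - M.trace ^ 2) • 1 := by
  have h2 := ch_two M hdet
  have e : M ^ 4 = (M * M) * (M * M) := by
    rw [show (4:ℕ) = 2*2 from rfl, pow_mul, sq, sq]
  rw [e, h2]
  simp only [mul_sub, sub_mul, smul_mul_assoc, mul_smul_comm, smul_smul, mul_one, one_mul,
    smul_sub, h2]
  module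

/-- If `F` is a field of characteristic zero in which `X⁴ + 1` is irreducible (e.g. `F = ℚ`),
then `-I₂` is not of the form `A⁴B⁴` with `A, B ∈ SL₂(F)`. -/
theorem neg_one_not_fourth_powers {F : Type*} [Field F] [CharZero F]
    (hirr : Irreducible (X ^ 4 + 1 : F[X])) :
    ¬ ∃ A B : Matrix.SpecialLinearGroup (Fin 2) F,
        ((A ^ 4 * B ^ 4 : Matrix.SpecialLinearGroup (Fin 2) F) : Matrix (Fin 2) (Fin 2) F) =
          -1 := by
  rintro ⟨A, B, h⟩
  set M : Matrix (Fin 2) (Fin 2) F := ↑A with hM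
  set N : Matrix (Fin 2) (Fin 2) F := ↑B with hN
  have hdM : M.det = 1 := A.2
  have hdN : N.det = 1 := B.2
  have h : M ^ 4 * N ^ 4 = -1 := by
    simpa [Matrix.SpecialLinearGroup.coe_mul, Matrix.SpecialLinearGroup.coe_pow] using h
  set t := M.trace with ht
  set s := N.trace with hs
  set f : F := t ^ 3 - 2 * t with hf
  set g : F := 1 - t ^ 2 with hg
  set f' : F := s ^ 3 - 2 * s with hf'
  set g' : F := 1 - s ^ 2 with hg'
  have hM4 : M ^ 4 = f • M + g • 1 := pow_four_eq M hdM
  have hN4 : N ^ 4 = f' • N + g' • 1 := pow_four_eq N hdN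
  -- trace of M^4
  have htr : (M ^ 4).trace = f * t + 2 * g := by
    rw [hM4]
    simp [Matrix.trace_smul, Matrix.trace_one, smul_eq_mul]
    ring
  -- det of M^4 is 1, so (M^4)⁻¹ = trace • 1 - M^4, hence N^4 = M^4 - trace • 1
  have hd4 : (M ^ 4).det = 1 := by rw [Matrix.det_pow, hdM]; norm_num
  have hCH := ch_two (M ^ 4) hd4
  have hinv : ((M ^ 4).trace • (1 : Matrix (Fin 2) (Fin 2) F) - M ^ 4) * M ^ 4 = 1 := by
    rw [sub_mul, smul_mul_assoc, one_mul]
    rw [hCH]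
    module
  have hNeq : N ^ 4 = M ^ 4 - (M ^ 4).trace • 1 := by
    have := congrArg (fun X => ((M ^ 4).trace • (1 : Matrix (Fin 2) (Fin 2) F) - M ^ 4) * X) h
    simp only [← mul_assoc, hinv, one_mul] at this
    rw [this, mul_neg_one, neg_sub]
  set c : F := f * t + g + g' with hc
  have hkey : f' • N = f • M - c • (1 : Matrix (Fin 2) (Fin 2) F) := by
    have e : f' • N + g' • (1 : Matrix (Fin 2) (Fin 2) F)
        = f • M + g • 1 - (f * t + 2 * g) • 1 := by
      rw [← hN4, ← hM4, hNeq, htr]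
    rw [hc]
    simp only [add_smul]
    linear_combination (norm := module) e
  by_cases hf'0 : f' = 0
  · -- M ^ 4 is a scalar matrix
    have hsc : ∃ a : F, M ^ 4 = a • 1 := by
      by_cases hf0 : f = 0
      · exact ⟨g, by rw [hM4, hf0]; module⟩
      · have hMsc : M = (c / f) • 1 := by
          have e2 := hkey
          rw [hf'0, zero_smul] at e2
          have : f • M = c • (1 : Matrix (Fin 2) (Fin 2) F) := by
            linear_combination (norm := module) -e2
          have := congrArg (fun X => (f⁻¹ : F) • X) this
          simpa [smul_smul, inv_mul_cancel₀ hf0, div_eq_inv_mul] using this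
        exact ⟨(c / f) ^ 4, by rw [hMsc, _root_.smul_pow, one_pow]⟩
    obtain ⟨a, ha⟩ := hsc
    have ha2 : a ^ 2 = 1 := by
      have := hd4
      rw [ha, Matrix.det_smul, Matrix.det_one] at this
      simpa using this
    have ha4 : a ^ 4 = 1 ∨ a ^ 4 = -1 := by
      left
      have : a ^ 4 = (a ^ 2) ^ 2 := by ring
      rw [this, ha2, one_pow]
    have : a = 1 ∨ a = -1 := by
      have : (a - 1) * (a + 1) = 0 := by linear_combination ha2
      rcases mul_eq_zero.mp this with h1 | h1
      · exact Or.inl (sub_eq_zero.mp h1)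
      · exact Or.inr (eq_neg_of_add_eq_zero_left h1)
    rcases this with rfl | rfl
    · -- M^4 = 1, so N^4 = -1
      rw [ha, one_smul, one_mul] at h
      exact no_fourth_root_neg_one hirr N h
    · -- M^4 = -1
      have : M ^ 4 = -1 := by rw [ha]; module
      exact no_fourth_root_neg_one hirr M this
  · -- N commutes with M
    have hNform : N = (f'⁻¹ * f) • M - (f'⁻¹ * c) • 1 := by
      have := congrArg (fun X => (f'⁻¹ : F) • X) hkey
      simpa [smul_sub, smul_smul, inv_mul_cancel₀ hf'0] using this
    have hcomm : Commute M N := by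
      rw [hNform]
      exact (((Commute.refl M).smul_right _).sub_right ((Commute.one_right M).smul_right _))
    have : (M * N) ^ 4 = -1 := by rw [hcomm.mul_pow, h]
    exact no_fourth_root_neg_one hirr (M * N) this
end

section
/- Let F be an infinite field and let w₁ ∈ F_{d₁}, w₂ ∈ F_{d₂} be nontrivial words. Then the set of λ ∈ F, λ ≠ 0, such that the diagonal matrix diag(λ, λ⁻¹) is a product g₁g₂ with g₁ ∈ w₁(SL₂(F)) and g₂ ∈ w₂(SL₂(F)), is infinite. -/
def wordValues {d : ℕ} (w : FreeGroup (Fin d)) (G : Type*) [Group G] : Set G :=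
  Set.range fun g : Fin d → G => FreeGroup.lift g w

/-!
An element `u ∈ SL₂(F)` with `u₁₀ ≠ 0` is `GL₂(F)`-conjugate to the companion matrix of its
characteristic polynomial, so it is determined up to conjugacy by its trace; word values are
stable under this conjugation. For `λ ∉ {0, ±1}` and any traces `a`, `b` one writes down
`g₁ g₂ = diag(λ, λ⁻¹)` with `tr gᵢ` prescribed and `(gᵢ)₁₀ ≠ 0`. Hence it suffices that a
nontrivial word `w` has a value with nonzero lower-left entry.

For that, pick distinct `z_ℓ ∈ F` indexed by the letters `ℓ = x_i^{±1}` and put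
`A_ℓ = (z_ℓ, 1)ᵀ (1, -z_{ℓ⁻¹})`. The matrices `A_ℓ - α² A_{ℓ⁻¹}`, rescaled by
`(α (z_ℓ - z_{ℓ⁻¹}))⁻¹`, lie in `SL₂(F)`, and those of `ℓ` and `ℓ⁻¹` are mutually inverse.
Up to a nonzero scalar, the lower-left entry of `w` evaluated at them is a polynomial in `α`
whose value at `α = 0` is that entry of `∏ A_ℓ` along the reduced word. This product of
rank-one matrices is nonzero there, since `(1, -z_{ℓ⁻¹}) · (z_{ℓ'}, 1) = z_{ℓ'} - z_{ℓ⁻¹}`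
vanishes only when `ℓ' = ℓ⁻¹`. An infinite field has a non-root `α ≠ 0`.
-/

open Matrix Polynomial

theorem MonoidHom.map_mem_wordValues {G H : Type*} [Group G] [Group H] (f : G →* H) {d : ℕ}
    {w : FreeGroup (Fin d)} {g : G} (hg : g ∈ wordValues w G) : f g ∈ wordValues w H := by
  obtain ⟨x, rfl⟩ := hg
  exact ⟨f ∘ x, (FreeGroup.lift_unique (f.comp (FreeGroup.lift x)) (by simp)).symm⟩

namespace Matrix

/-- The columns of `!![1, M 0 0; 0, M 1 0]` are `e₀` and `M e₀`; the identity is Cayley–Hamilton. -/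
theorem mul_eq_mul_companion_fin_two {R : Type*} [CommRing R] (M : Matrix (Fin 2) (Fin 2) R) :
    M * !![1, M 0 0; 0, M 1 0] = !![1, M 0 0; 0, M 1 0] * !![0, -M.det; 1, M.trace] := by
  ext i j
  fin_cases i <;> fin_cases j <;> simp [mul_apply, det_fin_two, trace_fin_two] <;> ring

theorem exists_inv_mul_mul_eq_companion_fin_two {F : Type*} [Field F]
    {M : Matrix (Fin 2) (Fin 2) F} (hM : M 1 0 ≠ 0) :
    ∃ P : GL (Fin 2) F, ((P⁻¹ : GL (Fin 2) F) : Matrix (Fin 2) (Fin 2) F) * M * P =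
      !![0, -M.det; 1, M.trace] := by
  set P := GeneralLinearGroup.mkOfDetNeZero !![1, M 0 0; 0, M 1 0] (by simpa using hM)
  have hP : (P : Matrix (Fin 2) (Fin 2) F) = !![1, M 0 0; 0, M 1 0] := rfl
  refine ⟨P, ?_⟩
  rw [mul_assoc, hP, mul_eq_mul_companion_fin_two, ← mul_assoc, ← hP, Units.inv_mul, one_mul]

namespace SpecialLinearGroup

variable {n R : Type*} [Fintype n] [DecidableEq n] [CommRing R]

def conjGL (P : GL n R) : SpecialLinearGroup n R →* SpecialLinearGroup n R where
  toFun g := ⟨(P : Matrix n n R) * g * ((P⁻¹ : GL n R) : Matrix n n R), by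
    rw [det_mul, det_mul, g.prop, mul_one, ← det_mul, Units.mul_inv, det_one]⟩
  map_one' := Subtype.ext (by simp)
  map_mul' g h := Subtype.ext (by
    change _ = (_ * _ * _) * (_ * _ * _)
    simp only [coe_mul, mul_assoc, Units.inv_mul_cancel_left])

@[simp]
theorem coe_conjGL (P : GL n R) (g : SpecialLinearGroup n R) :
    (conjGL P g : Matrix n n R) = (P : Matrix n n R) * g * ((P⁻¹ : GL n R) : Matrix n n R) :=
  rfl

variable {F : Type*} [Field F]

theorem exists_conjGL_eq_of_trace_eq {u N : SpecialLinearGroup (Fin 2) F}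
    (hu : (u : Matrix (Fin 2) (Fin 2) F) 1 0 ≠ 0) (hN : (N : Matrix (Fin 2) (Fin 2) F) 1 0 ≠ 0)
    (htr : trace (u : Matrix (Fin 2) (Fin 2) F) = trace (N : Matrix (Fin 2) (Fin 2) F)) :
    ∃ P : GL (Fin 2) F, conjGL P u = N := by
  obtain ⟨P, hP⟩ := exists_inv_mul_mul_eq_companion_fin_two hu
  obtain ⟨Q, hQ⟩ := exists_inv_mul_mul_eq_companion_fin_two hN
  have hdet : det (u : Matrix (Fin 2) (Fin 2) F) = det (N : Matrix (Fin 2) (Fin 2) F) := by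
    rw [u.prop, N.prop]
  rw [hdet, htr, ← hQ] at hP
  refine ⟨Q * P⁻¹, Subtype.ext ?_⟩
  have hN : (N : Matrix (Fin 2) (Fin 2) F) =
      Q * (((Q⁻¹ : GL (Fin 2) F) : Matrix (Fin 2) (Fin 2) F) * N * Q) *
        ((Q⁻¹ : GL (Fin 2) F) : Matrix (Fin 2) (Fin 2) F) := by
    simp [mul_assoc]
  rw [hN, ← hP]
  simp [mul_assoc]

theorem mem_wordValues_of_trace_eq {d : ℕ} {w : FreeGroup (Fin d)}
    {u N : SpecialLinearGroup (Fin 2) F} (hw : u ∈ wordValues w (SpecialLinearGroup (Fin 2) F))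
    (hu : (u : Matrix (Fin 2) (Fin 2) F) 1 0 ≠ 0) (hN : (N : Matrix (Fin 2) (Fin 2) F) 1 0 ≠ 0)
    (htr : trace (u : Matrix (Fin 2) (Fin 2) F) = trace (N : Matrix (Fin 2) (Fin 2) F)) :
    N ∈ wordValues w (SpecialLinearGroup (Fin 2) F) := by
  obtain ⟨P, rfl⟩ := exists_conjGL_eq_of_trace_eq hu hN htr
  exact (conjGL P).map_mem_wordValues hw

theorem exists_mul_eq_diagonal_of_trace (a b : F) {l : F} (hl₀ : l ≠ 0) (hl₁ : l ^ 2 ≠ 1) :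
    ∃ g₁ g₂ : SpecialLinearGroup (Fin 2) F,
      trace (g₁ : Matrix (Fin 2) (Fin 2) F) = a ∧ trace (g₂ : Matrix (Fin 2) (Fin 2) F) = b ∧
      (g₁ : Matrix (Fin 2) (Fin 2) F) 1 0 ≠ 0 ∧ (g₂ : Matrix (Fin 2) (Fin 2) F) 1 0 ≠ 0 ∧
      ((g₁ * g₂ : SpecialLinearGroup (Fin 2) F) : Matrix (Fin 2) (Fin 2) F) =
        diagonal ![l, l⁻¹] := by
  have hl : l - l⁻¹ ≠ 0 := by
    rw [sub_ne_zero]; contrapose! hl₁; field_simp at hl₁; linear_combination hl₁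
  -- `g₂ = g₁⁻¹ diag(l, l⁻¹)`, and `s` solves the linear equation `trace g₂ = b`
  set s := (b - a * l⁻¹) / (l - l⁻¹)
  have hs : s * (l - l⁻¹) = b - a * l⁻¹ := div_mul_cancel₀ _ hl
  refine ⟨⟨!![a - s, (a - s) * s - 1; 1, s], by rw [det_fin_two_of]; ring⟩,
    ⟨!![s * l, (1 - (a - s) * s) * l⁻¹; -l, (a - s) * l⁻¹], by
      rw [det_fin_two_of]; field_simp; ring⟩, by simp [trace_fin_two],
    by simp [trace_fin_two]; linear_combination hs, by simp, by simpa using hl₀, ?_⟩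
  change !![a - s, _; _, _] * !![_, _; _, _] = _
  ext i j
  fin_cases i <;> fin_cases j <;> simp [mul_apply] <;> field_simp <;> ring

end SpecialLinearGroup

end Matrix

theorem List.prod_map_smul {ι M N : Type*} [CommMonoid M] [Monoid N] [MulAction M N]
    [IsScalarTower M N N] [SMulCommClass M N N] (l : List ι) (c : ι → M) (f : ι → N) :
    (l.map fun i => c i • f i).prod = (l.map c).prod • (l.map f).prod := by
  induction l with
  | nil => simp
  | cons i l ih => simp only [map_cons, prod_cons, ih, smul_mul_smul_comm]

theorem apply_ne_apply_letter_inv {ι β : Type*} {z : ι × Bool → β} (hz : Function.Injective z)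
    (ℓ : ι × Bool) : z ℓ ≠ z (ℓ.1, !ℓ.2) := fun h => by
  simpa using congrArg Prod.snd (hz h)

section Letters

variable {ι R S : Type*} [CommRing R] [CommRing S] (z : ι × Bool → R) (t : R) (ℓ : ι × Bool)

/-- The matrix `A_ℓ` of the module docstring; `(ℓ.1, !ℓ.2)` is the letter `ℓ⁻¹`. -/
def letterMatrix : Matrix (Fin 2) (Fin 2) R :=
  vecMulVec ![z ℓ, 1] ![1, -z (ℓ.1, !ℓ.2)]

def letterPencil : Matrix (Fin 2) (Fin 2) R :=
  letterMatrix z ℓ - t ^ 2 • letterMatrix z (ℓ.1, !ℓ.2)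

theorem letterPencil_zero : letterPencil z 0 = letterMatrix z := by
  ext ℓ
  simp [letterPencil]

theorem RingHom.mapMatrix_letterPencil (f : R →+* S) :
    f.mapMatrix (letterPencil z t ℓ) = letterPencil (f ∘ z) (f t) ℓ := by
  ext i j
  fin_cases i <;> fin_cases j <;> simp [letterPencil, letterMatrix]

theorem det_letterPencil : (letterPencil z t ℓ).det = (t * (z ℓ - z (ℓ.1, !ℓ.2))) ^ 2 := by
  simp [letterPencil, letterMatrix, det_fin_two]
  ring

theorem letterPencil_mul_letterPencil_inv :
    letterPencil z t ℓ * letterPencil z t (ℓ.1, !ℓ.2) = -(t * (z ℓ - z (ℓ.1, !ℓ.2))) ^ 2 • 1 := by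
  ext i j
  fin_cases i <;> fin_cases j <;> simp [letterPencil, letterMatrix, mul_apply] <;> ring

theorem letterMatrix_mul_vecMulVec (ℓ' : ι × Bool) (r : Fin 2 → R) :
    letterMatrix z ℓ * vecMulVec ![z ℓ', 1] r =
      vecMulVec ![z ℓ, 1] ((z ℓ' - z (ℓ.1, !ℓ.2)) • r) := by
  rw [letterMatrix, vecMulVec_mul_vecMulVec]
  congr 2
  simp [dotProduct]
  ring

variable {z} in
theorem exists_prod_letterMatrix_eq_vecMulVec [IsDomain R] (hz : Function.Injective z) :
    ∀ (ℓ : ι × Bool) (L : List (ι × Bool)), FreeGroup.IsReduced (ℓ :: L) →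
      ∃ r : Fin 2 → R, r 0 ≠ 0 ∧ ((ℓ :: L).map (letterMatrix z)).prod = vecMulVec ![z ℓ, 1] r
  | ℓ, [], _ => ⟨![1, -z (ℓ.1, !ℓ.2)], by simp, by simp [letterMatrix]⟩
  | ℓ, ℓ' :: L, hL => by
    rw [FreeGroup.isReduced_cons_cons] at hL
    obtain ⟨r, hr, hprod⟩ := exists_prod_letterMatrix_eq_vecMulVec hz ℓ' L hL.2
    have hℓ' : z ℓ' - z (ℓ.1, !ℓ.2) ≠ 0 := by
      refine sub_ne_zero.2 fun h => ?_
      obtain ⟨h₁, h₂⟩ := Prod.ext_iff.1 (hz h)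
      simpa [h₂] using hL.1 h₁.symm
    refine ⟨(z ℓ' - z (ℓ.1, !ℓ.2)) • r, by simpa using mul_ne_zero hℓ' hr, ?_⟩
    rw [List.map_cons, List.prod_cons, hprod, letterMatrix_mul_vecMulVec]

variable {z} in
theorem prod_letterMatrix_apply_one_zero_ne_zero [IsDomain R]
    (hz : Function.Injective z) {L : List (ι × Bool)} (hL : FreeGroup.IsReduced L) (hne : L ≠ []) :
    (L.map (letterMatrix z)).prod 1 0 ≠ 0 := by
  obtain ⟨ℓ, L, rfl⟩ := List.exists_cons_of_ne_nil hne
  obtain ⟨r, hr, hprod⟩ := exists_prod_letterMatrix_eq_vecMulVec hz ℓ L hL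
  rw [hprod, vecMulVec_apply]
  simpa using hr

theorem mapMatrix_eval_prod_letterPencil (L : List (ι × Bool)) :
    (evalRingHom t).mapMatrix (L.map (letterPencil (C ∘ z) X)).prod =
      (L.map (letterPencil z t)).prod := by
  rw [map_list_prod, List.map_map]
  congr 1
  refine List.map_congr_left fun ℓ _ => ?_
  simp only [Function.comp_apply, RingHom.mapMatrix_letterPencil]
  congr 1
  · ext; simp
  · simp

end Letters

section LetterSL

variable {ι F : Type*} [Field F] {z : ι × Bool → F} {α : F}

variable (z α) in
noncomputable def letterSL (ℓ : ι × Bool) : Matrix (Fin 2) (Fin 2) F :=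
  (α * (z ℓ - z (ℓ.1, !ℓ.2)))⁻¹ • letterPencil z α ℓ

theorem smul_letterSL (hα : α ≠ 0) {ℓ : ι × Bool} (hz : z ℓ ≠ z (ℓ.1, !ℓ.2)) :
    (α * (z ℓ - z (ℓ.1, !ℓ.2))) • letterSL z α ℓ = letterPencil z α ℓ := by
  rw [letterSL, smul_smul, mul_inv_cancel₀ (mul_ne_zero hα (sub_ne_zero.2 hz)), one_smul]

theorem det_letterSL (hα : α ≠ 0) {ℓ : ι × Bool} (hz : z ℓ ≠ z (ℓ.1, !ℓ.2)) :
    (letterSL z α ℓ).det = 1 := by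
  have := sub_ne_zero.2 hz
  rw [letterSL, det_smul, det_letterPencil, Fintype.card_fin]
  field_simp

theorem letterSL_mul_letterSL_inv (hα : α ≠ 0) {ℓ : ι × Bool} (hz : z ℓ ≠ z (ℓ.1, !ℓ.2)) :
    letterSL z α ℓ * letterSL z α (ℓ.1, !ℓ.2) = 1 := by
  have := sub_ne_zero.2 hz
  have := sub_ne_zero.2 hz.symm
  rw [letterSL, letterSL, smul_mul_smul_comm, letterPencil_mul_letterPencil_inv, smul_smul]
  simp only [Bool.not_not]
  convert one_smul F (1 : Matrix (Fin 2) (Fin 2) F)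
  field_simp
  ring

theorem exists_coe_lift_mk_eq_prod_letterSL (hα : α ≠ 0) (hz : Function.Injective z)
    (L : List (ι × Bool)) : ∃ g : ι → SpecialLinearGroup (Fin 2) F,
      ((FreeGroup.lift g (FreeGroup.mk L) : SpecialLinearGroup (Fin 2) F) :
        Matrix (Fin 2) (Fin 2) F) = (L.map (letterSL z α)).prod := by
  have hinv := apply_ne_apply_letter_inv hz
  let g (i : ι) : SpecialLinearGroup (Fin 2) F := ⟨letterSL z α (i, true), det_letterSL hα (hinv _)⟩
  have hg (ℓ : ι × Bool) :
      ((cond ℓ.2 (g ℓ.1) (g ℓ.1)⁻¹ : SpecialLinearGroup (Fin 2) F) : Matrix (Fin 2) (Fin 2) F) =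
        letterSL z α ℓ := by
    obtain ⟨i, _ | _⟩ := ℓ
    · have : (g i)⁻¹ = ⟨letterSL z α (i, false), det_letterSL hα (hinv _)⟩ :=
        inv_eq_of_mul_eq_one_right (Subtype.ext (letterSL_mul_letterSL_inv hα (hinv _)))
      change (((g i)⁻¹ : SpecialLinearGroup (Fin 2) F) : Matrix (Fin 2) (Fin 2) F) = _
      rw [this]
    · rfl
  refine ⟨g, ?_⟩
  rw [FreeGroup.lift_mk, ← SpecialLinearGroup.coeMonoidHom_apply, map_list_prod, List.map_map]
  exact congrArg List.prod (List.map_congr_left fun ℓ _ => hg ℓ)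

end LetterSL

theorem exists_mem_wordValues_apply_one_zero_ne_zero {F : Type*} [Field F] [Infinite F] {d : ℕ}
    {w : FreeGroup (Fin d)} (hw : w ≠ 1) :
    ∃ u ∈ wordValues w (SpecialLinearGroup (Fin 2) F), (u : Matrix (Fin 2) (Fin 2) F) 1 0 ≠ 0 := by
  set z : Fin d × Bool → F := Infinite.natEmbedding F ∘ Encodable.encode
  have hz : Function.Injective z :=
    (Infinite.natEmbedding F).injective.comp Encodable.encode_injective
  set L := w.toWord
  have hL : L ≠ [] := by simpa [L] using hw
  set q : F[X] := (L.map (letterPencil (C ∘ z) X)).prod 1 0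
  have hq (t : F) : q.eval t = (L.map (letterPencil z t)).prod 1 0 := by
    rw [← mapMatrix_eval_prod_letterPencil]
    rfl
  have hXq : X * q ≠ 0 := mul_ne_zero X_ne_zero fun h =>
    prod_letterMatrix_apply_one_zero_ne_zero hz FreeGroup.isReduced_toWord hL
      (by simpa [h, letterPencil_zero] using (hq 0).symm)
  obtain ⟨α, hα⟩ := (finite_setOfPred_isRoot hXq).infinite_compl.nonempty
  obtain ⟨hα, hqα⟩ : α ≠ 0 ∧ q.eval α ≠ 0 := by simpa using hα
  obtain ⟨g, hg⟩ := exists_coe_lift_mk_eq_prod_letterSL hα hz L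
  refine ⟨FreeGroup.lift g w, ⟨g, rfl⟩, fun h => hqα ?_⟩
  rw [← FreeGroup.mk_toWord (x := w), hg] at h
  rw [hq, ← List.map_congr_left fun ℓ _ => smul_letterSL hα (apply_ne_apply_letter_inv hz ℓ),
    List.prod_map_smul, Matrix.smul_apply, h, smul_zero]

/-- If `F` is an infinite field and `w₁, w₂` are nontrivial words, then there are infinitely many
`λ ≠ 0` in `F` with `diag(λ, λ⁻¹) ∈ w₁(SL₂(F)) · w₂(SL₂(F))`. -/
theorem diag_in_word_product_infinite {F : Type*} [Field F] [Infinite F]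
    {d₁ d₂ : ℕ} (w₁ : FreeGroup (Fin d₁)) (w₂ : FreeGroup (Fin d₂))
    (hw₁ : w₁ ≠ 1) (hw₂ : w₂ ≠ 1) :
    {l : F | l ≠ 0 ∧
      ∃ g₁ ∈ wordValues w₁ (Matrix.SpecialLinearGroup (Fin 2) F),
        ∃ g₂ ∈ wordValues w₂ (Matrix.SpecialLinearGroup (Fin 2) F),
          ((g₁ * g₂ : Matrix.SpecialLinearGroup (Fin 2) F) : Matrix (Fin 2) (Fin 2) F) =
            Matrix.diagonal ![l, l⁻¹]}.Infinite := by
  obtain ⟨u₁, hu₁, hu₁₀⟩ := exists_mem_wordValues_apply_one_zero_ne_zero (F := F) hw₁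
  obtain ⟨u₂, hu₂, hu₂₀⟩ := exists_mem_wordValues_apply_one_zero_ne_zero (F := F) hw₂
  refine (Set.toFinite ({0, 1, -1} : Set F)).infinite_compl.mono fun l hl => ?_
  simp only [Set.mem_compl_iff, Set.mem_insert_iff, Set.mem_singleton_iff, not_or] at hl
  obtain ⟨hl₀, hl₁, hl_neg⟩ := hl
  obtain ⟨g₁, g₂, htr₁, htr₂, hg₁, hg₂, hprod⟩ :=
    SpecialLinearGroup.exists_mul_eq_diagonal_of_trace (trace (u₁ : Matrix (Fin 2) (Fin 2) F))
      (trace (u₂ : Matrix (Fin 2) (Fin 2) F)) hl₀ (by simp [sq_eq_one_iff, hl₁, hl_neg])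
  exact ⟨hl₀, g₁, SpecialLinearGroup.mem_wordValues_of_trace_eq hu₁ hu₁₀ hg₁ htr₁.symm,
    g₂, SpecialLinearGroup.mem_wordValues_of_trace_eq hu₂ hu₂₀ hg₂ htr₂.symm, hprod⟩
end
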